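/- Let δ* minimize ‖y − Bδ‖² over δ ⪰ 0 and let Λ* be its support. If the columns of B indexed by Λ* are linearly independent, then (B_{Λ*})⁺ y ≻ 0 (strictly positive entrywise) and yᵀ P_{Λ*}^⊥ b_i ≤ 0 for every i ∉ Λ*. -/

import Mathlib

open Matrix

variable {m n : ℕ}

/-- Squared Euclidean norm of a real vector. -/
def sqn {k : ℕ} (v : Fin k → ℝ) : ℝ := ∑ i, v i ^ 2

/-- Submatrix of the columns of `B` with indices in `Λ`. -/
noncomputable def colSub (B : Matrix (Fin m) (Fin n) ℝ) (Λ : Finset (Fin n)) :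
    Matrix (Fin m) {i // i ∈ Λ} ℝ := Matrix.of fun r j => B r j.1

/-- Pseudoinverse `(B_Λᵀ B_Λ)⁻¹ B_Λᵀ` of the column submatrix `B_Λ`. -/
noncomputable def pinvSub (B : Matrix (Fin m) (Fin n) ℝ) (Λ : Finset (Fin n)) :
    Matrix {i // i ∈ Λ} (Fin m) ℝ :=
  ((colSub B Λ)ᵀ * colSub B Λ)⁻¹ * (colSub B Λ)ᵀ

/-- Orthogonal projector onto the orthogonal complement of the column space of `B_Λ`. -/
noncomputable def projPerp (B : Matrix (Fin m) (Fin n) ℝ) (Λ : Finset (Fin n)) :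
    Matrix (Fin m) (Fin m) ℝ := 1 - colSub B Λ * pinvSub B Λ

/-!
Let `r = y - B δ*` be the residual. Moving `δ*` a little along `e_i`, or along `-e_j` when
`j ∈ Λ*`, stays feasible, so first-order optimality gives `rᵀ b_i ≤ 0` for every `i` and
`rᵀ b_j = 0` on the support. The latter are the normal equations of least squares on the columns
`B_{Λ*}`, whose unique solution is `δ*` restricted to `Λ*`; hence `(B_{Λ*})⁺ y = δ*|_{Λ*} ≻ 0`.
Finally `P^⊥` is symmetric and `P^⊥ y = y - B_{Λ*} δ*|_{Λ*} = r`, so `yᵀ P^⊥ b_i = rᵀ b_i ≤ 0`.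
-/

open Filter Topology

lemma dotProduct_le_zero_of_dotProduct_self_le_sub_smul {ι : Type*} [Fintype ι]
    (r w : ι → ℝ) {ε : ℝ} (hε : 0 < ε)
    (h : ∀ t, 0 < t → t ≤ ε → r ⬝ᵥ r ≤ (r - t • w) ⬝ᵥ (r - t • w)) : r ⬝ᵥ w ≤ 0 := by
  have hbound : ∀ᶠ t in 𝓝[>] (0 : ℝ), 2 * (r ⬝ᵥ w) ≤ t * (w ⬝ᵥ w) := by
    filter_upwards [Ioc_mem_nhdsGT hε] with t ⟨ht, htε⟩
    have hexp := h t ht htε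
    simp only [sub_dotProduct, dotProduct_sub, smul_dotProduct, dotProduct_smul, smul_eq_mul,
      dotProduct_comm w r] at hexp
    nlinarith
  have hlim : Tendsto (fun t : ℝ => t * (w ⬝ᵥ w)) (𝓝[>] 0) (𝓝 0) := by
    simpa using ((tendsto_id (x := 𝓝 (0 : ℝ))).mul_const (w ⬝ᵥ w)).mono_left nhdsWithin_le_nhds
  linarith [ge_of_tendsto hlim hbound]

lemma sqn_eq_dotProduct {k : ℕ} (v : Fin k → ℝ) : sqn v = v ⬝ᵥ v := by
  simp [sqn, dotProduct, pow_two]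

section NNLS

variable (B : Matrix (Fin m) (Fin n) ℝ) (y : Fin m → ℝ) {δs : Fin n → ℝ}

lemma residual_dotProduct_mulVec_le_zero
    (hmin : ∀ δ : Fin n → ℝ, (∀ j, 0 ≤ δ j) → sqn (y - B *ᵥ δs) ≤ sqn (y - B *ᵥ δ))
    (v : Fin n → ℝ) {ε : ℝ} (hε : 0 < ε)
    (hfeas : ∀ t : ℝ, 0 < t → t ≤ ε → ∀ j, 0 ≤ δs j + t * v j) :
    (y - B *ᵥ δs) ⬝ᵥ (B *ᵥ v) ≤ 0 := by
  refine dotProduct_le_zero_of_dotProduct_self_le_sub_smul _ _ hε fun t ht htε => ?_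
  have h := hmin (δs + t • v) (hfeas t ht htε)
  rwa [sqn_eq_dotProduct, sqn_eq_dotProduct, mulVec_add, mulVec_smul, ← sub_sub] at h

lemma residual_dotProduct_col_le_zero (hpos : ∀ j, 0 ≤ δs j)
    (hmin : ∀ δ : Fin n → ℝ, (∀ j, 0 ≤ δ j) → sqn (y - B *ᵥ δs) ≤ sqn (y - B *ᵥ δ))
    (i : Fin n) : (y - B *ᵥ δs) ⬝ᵥ B.col i ≤ 0 := by
  rw [← mulVec_single_one]
  refine residual_dotProduct_mulVec_le_zero B y hmin _ one_pos fun t ht _ j => ?_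
  rcases eq_or_ne j i with rfl | hne
  · simp only [Pi.single_eq_same, mul_one]
    linarith [hpos j]
  · simp [Pi.single_eq_of_ne hne, hpos j]

lemma residual_dotProduct_col_eq_zero (hpos : ∀ j, 0 ≤ δs j)
    (hmin : ∀ δ : Fin n → ℝ, (∀ j, 0 ≤ δ j) → sqn (y - B *ᵥ δs) ≤ sqn (y - B *ᵥ δ))
    {i : Fin n} (hi : 0 < δs i) : (y - B *ᵥ δs) ⬝ᵥ B.col i = 0 := by
  refine le_antisymm (residual_dotProduct_col_le_zero B y hpos hmin i) ?_
  have h := residual_dotProduct_mulVec_le_zero B y hmin (-Pi.single i 1) hi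
    fun t _ hti j => by
      rcases eq_or_ne j i with rfl | hne
      · simp only [Pi.neg_apply, Pi.single_eq_same, mul_neg, mul_one]
        linarith
      · simp [Pi.single_eq_of_ne hne, hpos j]
  rwa [mulVec_neg, mulVec_single_one, dotProduct_neg, neg_nonpos] at h

end NNLS

section ColumnSubmatrix

variable (B : Matrix (Fin m) (Fin n) ℝ) {Λ : Finset (Fin n)}

lemma colSub_mulVec_of_support_subset {δ : Fin n → ℝ} (hδ : ∀ j ∉ Λ, δ j = 0) :
    colSub B Λ *ᵥ (fun j => δ j.1) = B *ᵥ δ := by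
  funext k
  simp only [mulVec, dotProduct, colSub, of_apply]
  rw [Finset.sum_coe_sort Λ fun j => B k j * δ j]
  exact Finset.sum_subset (Finset.subset_univ Λ) fun j _ hj => by simp [hδ j hj]

lemma transpose_colSub_mulVec_apply (v : Fin m → ℝ) (j : {i // i ∈ Λ}) :
    ((colSub B Λ)ᵀ *ᵥ v) j = v ⬝ᵥ B.col j.1 := by
  simp only [mulVec, dotProduct, transpose_apply, colSub, of_apply, col_apply, mul_comm]

lemma isUnit_det_transpose_mul_self {p q : Type*} [Fintype p] [Fintype q] [DecidableEq q]
    {A : Matrix p q ℝ} (hA : LinearIndependent ℝ A.col) : IsUnit (Aᵀ * A).det := by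
  have hpd := PosDef.conjTranspose_mul_self A (mulVec_injective_iff.mpr hA)
  rw [conjTranspose_eq_transpose_of_trivial] at hpd
  exact (isUnit_iff_isUnit_det _).mp hpd.isUnit

lemma pinvSub_mulVec_eq (hLI : LinearIndependent ℝ (colSub B Λ).col) {y : Fin m → ℝ}
    {x : {i // i ∈ Λ} → ℝ} (hx : (colSub B Λ)ᵀ *ᵥ (y - colSub B Λ *ᵥ x) = 0) :
    pinvSub B Λ *ᵥ y = x := by
  have hnormal : (colSub B Λ)ᵀ *ᵥ y = ((colSub B Λ)ᵀ * colSub B Λ) *ᵥ x := by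
    rw [← mulVec_mulVec, ← sub_eq_zero, ← mulVec_sub, hx]
  rw [pinvSub, ← mulVec_mulVec, hnormal, mulVec_mulVec,
    nonsing_inv_mul _ (isUnit_det_transpose_mul_self hLI), one_mulVec]

lemma transpose_projPerp : (projPerp B Λ)ᵀ = projPerp B Λ := by
  rw [projPerp, pinvSub, transpose_sub, transpose_one, transpose_mul, transpose_mul,
    transpose_transpose, transpose_nonsing_inv, transpose_mul, transpose_transpose, Matrix.mul_assoc]

lemma projPerp_mulVec (v : Fin m → ℝ) :
    projPerp B Λ *ᵥ v = v - colSub B Λ *ᵥ (pinvSub B Λ *ᵥ v) := by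
  rw [projPerp, sub_mulVec, one_mulVec, mulVec_mulVec]

end ColumnSubmatrix

/-- Converse support-recovery conditions: at an NNLS minimizer with support `Λ*` whose
columns are linearly independent, condition C1 holds strictly and C2 holds weakly. -/
theorem nnls_support_necessary (B : Matrix (Fin m) (Fin n) ℝ) (y : Fin m → ℝ)
    (δs : Fin n → ℝ) (hpos : ∀ j, 0 ≤ δs j)
    (hmin : ∀ δ : Fin n → ℝ, (∀ j, 0 ≤ δ j) →
      sqn (y - B.mulVec δs) ≤ sqn (y - B.mulVec δ))
    (Λs : Finset (Fin n)) (hΛs : ∀ j, j ∈ Λs ↔ 0 < δs j)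
    (hLI : LinearIndependent ℝ fun j : {i // i ∈ Λs} => (fun r => B r j.1 : Fin m → ℝ)) :
    (∀ j : {i // i ∈ Λs}, 0 < (pinvSub B Λs).mulVec y j) ∧
    (∀ i ∉ Λs, dotProduct y ((projPerp B Λs).mulVec fun r => B r i) ≤ 0) := by
  have hsupp : ∀ j ∉ Λs, δs j = 0 := fun j hj =>
    le_antisymm (not_lt.mp (mt (hΛs j).mpr hj)) (hpos j)
  have hfit := colSub_mulVec_of_support_subset B hsupp
  have hnormal : (colSub B Λs)ᵀ *ᵥ (y - colSub B Λs *ᵥ fun j => δs j.1) = 0 := by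
    funext j
    rw [hfit, transpose_colSub_mulVec_apply]
    exact residual_dotProduct_col_eq_zero B y hpos hmin ((hΛs j).mp j.2)
  have hpinv := pinvSub_mulVec_eq B hLI hnormal
  refine ⟨fun j => ?_, fun i _ => ?_⟩
  · rw [hpinv]
    exact (hΛs j).mp j.2
  · rw [dotProduct_mulVec, ← mulVec_transpose, transpose_projPerp, projPerp_mulVec, hpinv, hfit]
    exact residual_dotProduct_col_le_zero B y hpos hmin i
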